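/- Suppose A_1,…,A_n ∈ ℝ^{d×d'} satisfy (2,δ)-RIP, i.e. for every matrix X of rank at most 2, (1−δ)‖X‖_F² ≤ (1/n)Σ_i⟨A_i,X⟩² ≤ (1+δ)‖X‖_F². Then for every matrix M ∈ ℝ^{d×d'}: |(1/n)Σ_{i=1}^n ⟨A_i,M⟩² − ‖M‖_F²| ≤ 2δ‖M‖_*². -/

import Mathlib

open Matrix Finset

noncomputable def frobNorm {m n : Type*} [Fintype m] [Fintype n] (M : Matrix m n ℝ) : ℝ :=
  Real.sqrt (∑ i, ∑ j, (M i j) ^ 2)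

noncomputable def nuclearNorm {m n : Type*} [Fintype m] [Fintype n] [DecidableEq n]
    (M : Matrix m n ℝ) : ℝ :=
  ∑ i, Real.sqrt ((show (Mᵀ * M).IsHermitian by
    simpa [Matrix.conjTranspose_eq_transpose_of_trivial] using
      Matrix.isHermitian_conjTranspose_mul_self M).eigenvalues i)

/-- trace inner product ⟨A, B⟩ = tr(Aᵀ B). -/
noncomputable def minner {m n : Type*} [Fintype m] [Fintype n] (A B : Matrix m n ℝ) : ℝ :=
  Matrix.trace (Aᵀ * B)

/-- (r, δ)-RIP for the family of measurement matrices A. -/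
noncomputable def RIP {dL d0 n : ℕ} (r : ℕ) (δ : ℝ)
    (A : Fin n → Matrix (Fin dL) (Fin d0) ℝ) : Prop :=
  ∀ X : Matrix (Fin dL) (Fin d0) ℝ, X.rank ≤ r →
    (1 - δ) * frobNorm X ^ 2 ≤ (1 / (n : ℝ)) * ∑ i, minner (A i) X ^ 2 ∧
    (1 / (n : ℝ)) * ∑ i, minner (A i) X ^ 2 ≤ (1 + δ) * frobNorm X ^ 2

/-! The defect `E(X, Y) = (1/n) Σᵢ ⟨Aᵢ, X⟩⟨Aᵢ, Y⟩ - ⟨X, Y⟩` is a symmetric bilinear form, and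
RIP says `|E(Z, Z)| ≤ δ‖Z‖_F²` for every `Z` of rank at most two. Polarization and the
parallelogram law give `|E(X, Y)| ≤ δ(‖X‖_F² + ‖Y‖_F²)/2` for rank-one `X, Y`, hence
`|E(X, Y)| ≤ δ‖X‖_F‖Y‖_F` after normalizing `X` and `Y`. Over an orthonormal eigenbasis `(vⱼ)` of
`MᵀM` we have `M = Σⱼ M vⱼ vⱼᵀ`, a sum of rank-one matrices of Frobenius norms `√λⱼ`, so
expanding `E(M, M)` bilinearly gives `|E(M, M)| ≤ δ(Σⱼ √λⱼ)² = δ‖M‖_*²`. In particular the right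
side is nonnegative, which yields the bound with `2δ` even though `δ` may a priori be negative. -/

section Frobenius

variable {m n : Type*} [Fintype m] [Fintype n]

theorem minner_eq_sum (X Y : Matrix m n ℝ) : minner X Y = ∑ i, ∑ j, X i j * Y i j := by
  simp only [minner, trace, Matrix.diag, mul_apply, transpose_apply]
  exact sum_comm

theorem minner_comm (X Y : Matrix m n ℝ) : minner X Y = minner Y X := by
  simp only [minner_eq_sum, mul_comm]

theorem frobNorm_sq_eq_sum (X : Matrix m n ℝ) : frobNorm X ^ 2 = ∑ i, ∑ j, X i j ^ 2 :=
  Real.sq_sqrt (by positivity)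

theorem frobNorm_sq (X : Matrix m n ℝ) : frobNorm X ^ 2 = minner X X := by
  rw [frobNorm_sq_eq_sum, minner_eq_sum]
  simp only [sq]

theorem frobNorm_nonneg (X : Matrix m n ℝ) : 0 ≤ frobNorm X := Real.sqrt_nonneg _

theorem frobNorm_eq_zero {X : Matrix m n ℝ} : frobNorm X = 0 ↔ X = 0 := by
  rw [frobNorm, Real.sqrt_eq_zero (by positivity),
    Fintype.sum_eq_zero_iff_of_nonneg fun i => sum_nonneg fun j _ => sq_nonneg (X i j)]
  simp only [funext_iff, Pi.zero_apply, ← Matrix.ext_iff, Matrix.zero_apply]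
  refine forall_congr' fun i => ?_
  rw [Fintype.sum_eq_zero_iff_of_nonneg fun j => sq_nonneg (X i j)]
  simp [funext_iff]

theorem frobNorm_smul (c : ℝ) (X : Matrix m n ℝ) : frobNorm (c • X) = |c| * frobNorm X := by
  rw [← Real.sqrt_sq_eq_abs, frobNorm, frobNorm, ← Real.sqrt_mul (sq_nonneg c)]
  simp only [Matrix.smul_apply, smul_eq_mul, mul_pow, mul_sum]

theorem frobNorm_add_sq_add_frobNorm_sub_sq (X Y : Matrix m n ℝ) :
    frobNorm (X + Y) ^ 2 + frobNorm (X - Y) ^ 2 = 2 * (frobNorm X ^ 2 + frobNorm Y ^ 2) := by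
  simp only [frobNorm_sq_eq_sum, Matrix.add_apply, Matrix.sub_apply, mul_sum, ← sum_add_distrib]
  exact sum_congr rfl fun i _ => sum_congr rfl fun j _ => by ring

theorem minner_vecMulVec_self (u : m → ℝ) (w : n → ℝ) :
    minner (vecMulVec u w) (vecMulVec u w) = (u ⬝ᵥ u) * (w ⬝ᵥ w) := by
  simp only [minner_eq_sum, vecMulVec_apply, dotProduct, sum_mul_sum]
  exact sum_congr rfl fun i _ => sum_congr rfl fun j _ => by ring

noncomputable def minnerForm : LinearMap.BilinForm ℝ (Matrix m n ℝ) :=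
  LinearMap.mk₂ ℝ minner
    (fun X X' Y => by simp [minner, Matrix.add_mul])
    (fun c X Y => by simp [minner, Matrix.smul_mul])
    (fun X Y Y' => by simp [minner, Matrix.mul_add])
    (fun c X Y => by simp [minner, Matrix.mul_smul])

@[simp]
theorem minnerForm_apply (X Y : Matrix m n ℝ) : minnerForm X Y = minner X Y := rfl

end Frobenius

namespace Matrix

variable {m n K : Type*} [Fintype n] [Field K]

theorem rank_add_le (X Y : Matrix m n K) : (X + Y).rank ≤ X.rank + Y.rank := by
  rw [rank, rank, rank, mulVecLin_add]
  exact (Submodule.finrank_mono (LinearMap.range_add_le _ _)).trans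
    (Submodule.finrank_add_le_finrank_add_finrank _ _)

theorem rank_smul_le (c : K) (X : Matrix m n K) : (c • X).rank ≤ X.rank := by
  have : (c • X).mulVecLin = c • X.mulVecLin := by
    ext v; simp
  rw [rank, rank, this]
  exact Submodule.finrank_mono (LinearMap.range_smul_le_range _ _)

theorem rank_sub_le (X Y : Matrix m n K) : (X - Y).rank ≤ X.rank + Y.rank := by
  rw [sub_eq_add_neg, ← neg_one_smul K Y]
  exact (rank_add_le _ _).trans (Nat.add_le_add_left (rank_smul_le _ _) _)

end Matrix

open LinearMap.BilinForm

section RIPError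

variable {m n : Type*} [Fintype m] [Fintype n] {k : ℕ}

noncomputable def ripError (A : Fin k → Matrix m n ℝ) : LinearMap.BilinForm ℝ (Matrix m n ℝ) :=
  (1 / (k : ℝ)) • ∑ i, linMulLin (minnerForm (A i)) (minnerForm (A i)) - minnerForm

theorem ripError_apply (A : Fin k → Matrix m n ℝ) (X Y : Matrix m n ℝ) :
    ripError A X Y = (1 / (k : ℝ)) * ∑ i, minner (A i) X * minner (A i) Y - minner X Y := by
  simp [ripError, linMulLin_apply]

theorem ripError_apply_self (A : Fin k → Matrix m n ℝ) (X : Matrix m n ℝ) :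
    ripError A X X = (1 / (k : ℝ)) * ∑ i, minner (A i) X ^ 2 - frobNorm X ^ 2 := by
  rw [ripError_apply, frobNorm_sq]
  simp only [sq]

theorem ripError_isSymm (A : Fin k → Matrix m n ℝ) : (ripError A).IsSymm :=
  isSymm_def.mpr fun X Y => by simp only [ripError_apply, mul_comm, minner_comm X Y]

end RIPError

def QuadBoundOnRank {m n : Type*} [Fintype m] [Fintype n] (E : LinearMap.BilinForm ℝ (Matrix m n ℝ))
    (r : ℕ) (δ : ℝ) : Prop :=
  ∀ Z : Matrix m n ℝ, Z.rank ≤ r → |E Z Z| ≤ δ * frobNorm Z ^ 2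

theorem RIP.quadBoundOnRank_ripError {dL d0 k r : ℕ} {δ : ℝ}
    {A : Fin k → Matrix (Fin dL) (Fin d0) ℝ} (hA : RIP r δ A) :
    QuadBoundOnRank (ripError A) r δ := fun Z hZ => by
  obtain ⟨hlow, hup⟩ := hA Z hZ
  rw [ripError_apply_self, abs_le]
  constructor <;> linarith

namespace QuadBoundOnRank

variable {m n : Type*} [Fintype m] [Fintype n] {E : LinearMap.BilinForm ℝ (Matrix m n ℝ)} {δ : ℝ}

theorem abs_apply_le_add_sq (hE : E.IsSymm) (h : QuadBoundOnRank E 2 δ) {X Y : Matrix m n ℝ}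
    (hX : X.rank ≤ 1) (hY : Y.rank ≤ 1) :
    |E X Y| ≤ δ * (frobNorm X ^ 2 + frobNorm Y ^ 2) / 2 := by
  have hpolar : 4 * E X Y = E (X + Y) (X + Y) - E (X - Y) (X - Y) := by
    simp only [add_left, add_right, sub_left, sub_right, hE.eq Y X]
    ring
  obtain ⟨hadd₁, hadd₂⟩ := abs_le.mp (h (X + Y) ((Matrix.rank_add_le X Y).trans (by omega)))
  obtain ⟨hsub₁, hsub₂⟩ := abs_le.mp (h (X - Y) ((Matrix.rank_sub_le X Y).trans (by omega)))
  have hpar : δ * frobNorm (X + Y) ^ 2 + δ * frobNorm (X - Y) ^ 2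
      = 2 * (δ * (frobNorm X ^ 2 + frobNorm Y ^ 2)) := by
    rw [← mul_add, frobNorm_add_sq_add_frobNorm_sub_sq]
    ring
  rw [abs_le]
  constructor <;> linarith

theorem abs_apply_le_mul (hE : E.IsSymm) (h : QuadBoundOnRank E 2 δ) {X Y : Matrix m n ℝ}
    (hX : X.rank ≤ 1) (hY : Y.rank ≤ 1) : |E X Y| ≤ δ * (frobNorm X * frobNorm Y) := by
  rcases eq_or_ne (frobNorm X) 0 with hX0 | hX0
  · obtain rfl := frobNorm_eq_zero.mp hX0
    simp [hX0]
  rcases eq_or_ne (frobNorm Y) 0 with hY0 | hY0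
  · obtain rfl := frobNorm_eq_zero.mp hY0
    simp [hY0]
  set a := frobNorm X
  set b := frobNorm Y
  have ha : 0 < a := (frobNorm_nonneg X).lt_of_ne' hX0
  have hb : 0 < b := (frobNorm_nonneg Y).lt_of_ne' hY0
  have hunit := h.abs_apply_le_add_sq hE ((Matrix.rank_smul_le a⁻¹ X).trans hX)
    ((Matrix.rank_smul_le b⁻¹ Y).trans hY)
  rw [frobNorm_smul, frobNorm_smul, abs_inv, abs_inv, abs_of_pos ha, abs_of_pos hb,
    inv_mul_cancel₀ hX0, inv_mul_cancel₀ hY0] at hunit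
  have hscale : E X Y = (a * b) * E (a⁻¹ • X) (b⁻¹ • Y) := by
    rw [smul_left, smul_right]
    field_simp
  calc |E X Y| = (a * b) * |E (a⁻¹ • X) (b⁻¹ • Y)| := by
        rw [hscale, abs_mul, abs_of_pos (by positivity)]
    _ ≤ (a * b) * (δ * (1 ^ 2 + 1 ^ 2) / 2) := by gcongr
    _ = δ * (a * b) := by ring

theorem abs_apply_sum_self_le (hE : E.IsSymm) (h : QuadBoundOnRank E 2 δ) {ι : Type*}
    (s : Finset ι) {X : ι → Matrix m n ℝ} (hX : ∀ j ∈ s, (X j).rank ≤ 1) :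
    |E (∑ j ∈ s, X j) (∑ j ∈ s, X j)| ≤ δ * (∑ j ∈ s, frobNorm (X j)) ^ 2 := by
  calc |E (∑ j ∈ s, X j) (∑ j ∈ s, X j)| = |∑ j ∈ s, ∑ l ∈ s, E (X j) (X l)| := by
        rw [sum_left]
        simp only [sum_right]
    _ ≤ ∑ j ∈ s, ∑ l ∈ s, |E (X j) (X l)| :=
        (abs_sum_le_sum_abs _ _).trans (sum_le_sum fun j _ => abs_sum_le_sum_abs _ _)
    _ ≤ ∑ j ∈ s, ∑ l ∈ s, δ * (frobNorm (X j) * frobNorm (X l)) :=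
        sum_le_sum fun j hj => sum_le_sum fun l hl => h.abs_apply_le_mul hE (hX j hj) (hX l hl)
    _ = δ * (∑ j ∈ s, frobNorm (X j)) ^ 2 := by
        rw [sq, sum_mul_sum, mul_sum]
        simp only [mul_sum]

end QuadBoundOnRank

theorem OrthonormalBasis.dotProduct_self {ι n : Type*} [Fintype ι] [Fintype n]
    (b : OrthonormalBasis ι ℝ (EuclideanSpace ℝ n)) (j : ι) : ⇑(b j) ⬝ᵥ ⇑(b j) = 1 := by
  have h := real_inner_self_eq_norm_sq (b j)
  rwa [b.orthonormal.1 j, one_pow, EuclideanSpace.inner_eq_star_dotProduct, star_trivial] at h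

theorem OrthonormalBasis.sum_vecMulVec_self {ι n : Type*} [Fintype ι] [Fintype n] [DecidableEq n]
    (b : OrthonormalBasis ι ℝ (EuclideanSpace ℝ n)) :
    ∑ j, vecMulVec ⇑(b j) ⇑(b j) = 1 := by
  ext a c
  have := congrArg (· a) (b.sum_repr' (EuclideanSpace.single c 1))
  simpa [Matrix.sum_apply, vecMulVec_apply, Matrix.one_apply, EuclideanSpace.inner_single_right,
    mul_comm, eq_comm] using this

theorem frobNorm_mul_vecMulVec_self {m n : Type*} [Fintype m] [Fintype n] (M : Matrix m n ℝ)
    {v : n → ℝ} {μ : ℝ} (hv : v ⬝ᵥ v = 1) (hμ : (Mᵀ * M) *ᵥ v = μ • v) :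
    frobNorm (M * vecMulVec v v) = √μ := by
  have hMv : (M *ᵥ v) ⬝ᵥ (M *ᵥ v) = μ := calc
    (M *ᵥ v) ⬝ᵥ (M *ᵥ v) = v ⬝ᵥ ((Mᵀ * M) *ᵥ v) := by
      rw [← mulVec_mulVec, dotProduct_mulVec v Mᵀ, vecMul_transpose]
    _ = μ := by rw [hμ, dotProduct_smul, hv, smul_eq_mul, mul_one]
  rw [← Real.sqrt_sq (frobNorm_nonneg _), frobNorm_sq, mul_vecMulVec, minner_vecMulVec_self, hv,
    mul_one, hMv]

theorem exists_sum_rank_le_one_sum_frobNorm_eq_nuclearNorm {m n : Type*} [Fintype m] [Fintype n]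
    [DecidableEq n] (M : Matrix m n ℝ) :
    ∃ X : n → Matrix m n ℝ, (∀ j, (X j).rank ≤ 1) ∧ ∑ j, X j = M ∧
      ∑ j, frobNorm (X j) = nuclearNorm M := by
  have hN : (Mᵀ * M).IsHermitian := by
    simpa [conjTranspose_eq_transpose_of_trivial] using isHermitian_conjTranspose_mul_self M
  set b := hN.eigenvectorBasis
  refine ⟨fun j => M * vecMulVec ⇑(b j) ⇑(b j),
    fun j => (rank_mul_le_right _ _).trans (rank_vecMulVec_le _ _), ?_, ?_⟩
  · simp only [← Matrix.mul_sum, b.sum_vecMulVec_self, Matrix.mul_one]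
  · exact sum_congr rfl fun j _ =>
      frobNorm_mul_vecMulVec_self M (b.dotProduct_self j) (hN.mulVec_eigenvectorBasis j)

/-- (2,δ)-RIP implies approximate isometry on all matrices, with error
    2δ‖M‖_*². -/
theorem rip_relax {n d0 dL : ℕ} (δ : ℝ)
    (A : Fin n → Matrix (Fin dL) (Fin d0) ℝ) (hA : RIP 2 δ A)
    (M : Matrix (Fin dL) (Fin d0) ℝ) :
    |(1 / (n : ℝ)) * ∑ i, minner (A i) M ^ 2 - frobNorm M ^ 2|
      ≤ 2 * δ * nuclearNorm M ^ 2 := by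
  obtain ⟨X, hX_rank, hX_sum, hX_norm⟩ := exists_sum_rank_le_one_sum_frobNorm_eq_nuclearNorm M
  have hbound := hA.quadBoundOnRank_ripError.abs_apply_sum_self_le (ripError_isSymm A) univ
    fun j _ => hX_rank j
  rw [hX_sum, hX_norm, ripError_apply_self] at hbound
  linarith [abs_nonneg ((1 / (n : ℝ)) * ∑ i, minner (A i) M ^ 2 - frobNorm M ^ 2)]
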